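/- arXiv:1906.10240 — 6 statements merged into one kernel-verified Lean document; each statement's English description precedes it below -/
import Mathlib

section
/- If S_m ∈ ℝ^{d×m} has columns s₁, …, s_m that are orthonormal with respect to the inner product induced by a symmetric positive definite matrix B (i.e., S_mᵀ B S_m = I_m), then the matrix Σ_m := Σ₀ − Σ₀ Aᵀ S_m S_mᵀ A Σ₀, with B = A Σ₀ Aᵀ and Σ₀ symmetric positive definite, is symmetric positive semidefinite. -/
/-!
With `V = Aᵀ Sₘ` the posterior covariance is `Σ₀ - Σ₀ V (Vᵀ Σ₀ V)⁻¹ Vᵀ Σ₀`, where `Vᵀ Σ₀ V = 1`.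
This is the Schur complement of the lower right block of the positive semidefinite block matrix
`[1 V]ᵀ Σ₀ [1 V]`, hence positive semidefinite.
-/

open Matrix

namespace Matrix.PosSemidef

variable {n m : Type*} [Fintype n] [Fintype m]

theorem fromBlocks_conjTranspose_mul_mul_same {R : Type*} [CommRing R] [PartialOrder R]
    [StarRing R] [DecidableEq n] {S : Matrix n n R} (hS : S.PosSemidef) (V : Matrix n m R) :
    (fromBlocks S (S * V) (S * V)ᴴ (Vᴴ * S * V)).PosSemidef := by
  have := hS.conjTranspose_mul_mul_same (fromCols (1 : Matrix n n R) V)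
  rw [conjTranspose_fromCols_eq_fromRows_conjTranspose, conjTranspose_one, fromRows_mul,
    fromRows_mul_fromCols] at this
  simpa only [one_mul, Matrix.mul_one, conjTranspose_mul, hS.1.eq] using this

theorem sub_mul_mul_inv_mul_mul {K : Type*} [Field K] [PartialOrder K] [StarRing K]
    [StarOrderedRing K] [DecidableEq n] [DecidableEq m] {S : Matrix n n K} (hS : S.PosSemidef)
    (V : Matrix n m K) (hV : (Vᴴ * S * V).PosDef) :
    (S - S * V * (Vᴴ * S * V)⁻¹ * Vᴴ * S).PosSemidef := by
  have := hV.isUnit.invertible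
  have := (PosDef.fromBlocks₂₂ S (S * V) hV).mp (hS.fromBlocks_conjTranspose_mul_mul_same V)
  rwa [conjTranspose_mul, hS.1.eq, ← Matrix.mul_assoc] at this

end Matrix.PosSemidef

theorem stmt_11_general {d m : ℕ} (A Sig0 : Matrix (Fin d) (Fin d) ℝ)
    (hSig0 : Sig0.PosDef)
    (S : Matrix (Fin d) (Fin m) ℝ) (hS : Sᵀ * (A * Sig0 * Aᵀ) * S = 1) :
    (Sig0 - Sig0 * Aᵀ * S * Sᵀ * A * Sig0).PosSemidef := by
  have hV : (Aᵀ * S)ᴴ * Sig0 * (Aᵀ * S) = 1 := by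
    simpa only [conjTranspose_eq_transpose_of_trivial, transpose_mul, transpose_transpose,
      Matrix.mul_assoc] using hS
  have := hSig0.posSemidef.sub_mul_mul_inv_mul_mul (Aᵀ * S) (hV ▸ PosDef.one)
  rw [hV, inv_one, Matrix.mul_one] at this
  simpa only [conjTranspose_eq_transpose_of_trivial, transpose_mul, transpose_transpose,
    Matrix.mul_assoc] using this

/-- The BayesCG posterior covariance `Σₘ = Σ₀ − Σ₀ Aᵀ Sₘ Sₘᵀ A Σ₀` is symmetric positive
semidefinite, when the columns of `Sₘ` are orthonormal in the inner product induced by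
`B = A Σ₀ Aᵀ`. -/
theorem stmt_11 {d m : ℕ} (A Sig0 : Matrix (Fin d) (Fin d) ℝ)
    (hA : IsUnit A.det) (hSig0 : Sig0.PosDef)
    (S : Matrix (Fin d) (Fin m) ℝ) (hS : Sᵀ * (A * Sig0 * Aᵀ) * S = 1) :
    (Sig0 - Sig0 * Aᵀ * S * Sᵀ * A * Sig0).PosSemidef :=
  stmt_11_general A Sig0 hSig0 S hS
end

section
/- With Σ_m := Σ₀ − Σ₀ Aᵀ S_m S_mᵀ A Σ₀ where Σ₀ is symmetric positive definite, A invertible, and S_mᵀ (A Σ₀ Aᵀ) S_m = I_m, one has trace(Σ_m Σ₀⁻¹) = d − m. -/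
open Matrix

/-- Proposition 3 of the BayesCG paper: `trace (Σₘ Σ₀⁻¹) = d − m`. -/
theorem stmt_12 {d m : ℕ} (A Sig0 : Matrix (Fin d) (Fin d) ℝ)
    (hA : IsUnit A.det) (hSig0 : Sig0.PosDef)
    (S : Matrix (Fin d) (Fin m) ℝ) (hS : Sᵀ * (A * Sig0 * Aᵀ) * S = 1) :
    ((Sig0 - Sig0 * Aᵀ * S * Sᵀ * A * Sig0) * Sig0⁻¹).trace = (d : ℝ) - m := by
  have hinv : Sig0 * Sig0⁻¹ = 1 := mul_nonsing_inv _ <| isUnit_iff_ne_zero.mpr hSig0.det_pos.ne'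
  have h1 : (Sig0 - Sig0 * Aᵀ * S * Sᵀ * A * Sig0) * Sig0⁻¹
      = 1 - Sig0 * Aᵀ * S * Sᵀ * A := by
    rw [Matrix.sub_mul, hinv, mul_assoc (Sig0 * Aᵀ * S * Sᵀ * A), hinv, mul_one]
  rw [h1, trace_sub, trace_one]
  have h2 : (Sig0 * Aᵀ * S * Sᵀ * A).trace = (Sᵀ * (A * Sig0 * Aᵀ) * S).trace := by
    have e : Sig0 * Aᵀ * S * Sᵀ * A = (Sig0 * Aᵀ * S) * (Sᵀ * A) := by
      simp [Matrix.mul_assoc]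
    rw [e, trace_mul_comm]
    congr 1
    simp [Matrix.mul_assoc]
  rw [h2, hS, trace_one]
  simp
end

section
/- With Σ_m := Σ₀ − Σ₀ Aᵀ S_m S_mᵀ A Σ₀ where Σ₀ is symmetric positive definite, A invertible, and S_mᵀ (A Σ₀ Aᵀ) S_m = I_m with S_m of full column rank m, the rank of Σ_m equals d − m. -/
/-!
Writing `X = Σ₀ Aᵀ S` and `Y = Sᵀ A`, the posterior covariance factors as `Σₘ = (1 - X Y) Σ₀`.
The normalisation of `S` says exactly `Y X = 1`, so `X Y` is an (oblique) projection of rank `m`,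
its complement `1 - X Y` has rank `d - m`, and the invertible factor `Σ₀` does not change the rank.
-/

open Matrix

namespace Matrix

variable {m n K : Type*} [Fintype m] [Fintype n]

theorem rank_one_sub_of_isIdempotentElem [DecidableEq n] [Field K] {P : Matrix n n K}
    (hP : IsIdempotentElem P) : (1 - P).rank = Fintype.card n - P.rank := by
  have hker : LinearMap.ker P.mulVecLin = LinearMap.range (1 - P).mulVecLin := by
    have h := LinearMap.IsIdempotentElem.ker_eq_range_one_sub (hP.map toLinAlgEquiv')
    rwa [← map_one toLinAlgEquiv', ← map_sub] at h
  have hrank_nullity := LinearMap.finrank_range_add_finrank_ker P.mulVecLin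
  rw [hker, Module.finrank_fintype_fun_eq_card] at hrank_nullity
  rw [rank, rank]
  omega

theorem isIdempotentElem_mul_of_mul_eq_one [DecidableEq m] [Semiring K] {X : Matrix n m K}
    {Y : Matrix m n K} (h : Y * X = 1) : IsIdempotentElem (X * Y) := by
  rw [IsIdempotentElem, Matrix.mul_assoc, ← Matrix.mul_assoc Y, h, Matrix.one_mul]

theorem rank_mul_of_mul_eq_one [DecidableEq m] [CommSemiring K] [StrongRankCondition K]
    {X : Matrix n m K} {Y : Matrix m n K} (h : Y * X = 1) : (X * Y).rank = Fintype.card m := by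
  refine le_antisymm ((rank_mul_le_right X Y).trans Y.rank_le_card_height) ?_
  calc Fintype.card m = (Y * (X * Y) * X).rank := by
        rw [← Matrix.mul_assoc Y X Y, h, Matrix.one_mul, h, rank_one]
    _ ≤ (X * Y).rank := (rank_mul_le_left _ X).trans (rank_mul_le_right Y _)

end Matrix

theorem stmt_13_general {d m : ℕ} (A Sig0 : Matrix (Fin d) (Fin d) ℝ)
    (hSig0 : Sig0.PosDef)
    (S : Matrix (Fin d) (Fin m) ℝ) (hS : Sᵀ * (A * Sig0 * Aᵀ) * S = 1) :
    (Sig0 - Sig0 * Aᵀ * S * Sᵀ * A * Sig0).rank = d - m := by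
  have hYX : (Sᵀ * A) * (Sig0 * Aᵀ * S) = 1 := by
    rw [← hS]
    simp only [Matrix.mul_assoc]
  have hfactor :
      Sig0 - Sig0 * Aᵀ * S * Sᵀ * A * Sig0 = (1 - Sig0 * Aᵀ * S * (Sᵀ * A)) * Sig0 := by
    simp only [Matrix.sub_mul, Matrix.one_mul, Matrix.mul_assoc]
  rw [hfactor, rank_mul_eq_left_of_isUnit_det _ _ hSig0.det_pos.ne'.isUnit,
    rank_one_sub_of_isIdempotentElem (isIdempotentElem_mul_of_mul_eq_one hYX),
    rank_mul_of_mul_eq_one hYX, Fintype.card_fin, Fintype.card_fin]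

/-- The BayesCG posterior covariance `Σₘ = Σ₀ − Σ₀ Aᵀ Sₘ Sₘᵀ A Σ₀` has rank `d − m` when
`Sₘ` has full column rank `m` and `B`-orthonormal columns, `B = A Σ₀ Aᵀ`. -/
theorem stmt_13 {d m : ℕ} (hm : m ≤ d) (A Sig0 : Matrix (Fin d) (Fin d) ℝ)
    (hA : IsUnit A.det) (hSig0 : Sig0.PosDef)
    (S : Matrix (Fin d) (Fin m) ℝ) (hS : Sᵀ * (A * Sig0 * Aᵀ) * S = 1)
    (hrank : S.rank = m) :
    (Sig0 - Sig0 * Aᵀ * S * Sᵀ * A * Sig0).rank = d - m :=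
  stmt_13_general A Sig0 hSig0 S hS
end

section
/- The kernel of the BayesCG posterior covariance Σ_m := Σ₀ − Σ₀ Aᵀ S_m S_mᵀ A Σ₀ (with Σ₀ symmetric positive definite, A invertible, S_mᵀ A Σ₀ Aᵀ S_m = I_m) equals the span of the vectors Aᵀ s₁, …, Aᵀ s_m, where sᵢ are the columns of S_m. -/
open Matrix

namespace Matrix

variable {R : Type*} [CommRing R] {p d m : Type*} [Fintype d] [Fintype m] [Fintype p]
  [DecidableEq d] [DecidableEq m]

/-- `(Σ - Σ B C Σ) B = Σ B - Σ B (C Σ B) = 0`; conversely `Σ x = Σ B (C Σ x)` forces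
`x = B (C Σ x)` by injectivity of `Σ`. -/
theorem ker_toLin'_sub_mul_mul_mul_eq_range (Sig : Matrix p d R) (B : Matrix d m R)
    (C : Matrix m p R) (hSig : Function.Injective Sig.mulVec) (hCB : C * Sig * B = 1) :
    LinearMap.ker (toLin' (Sig - Sig * B * C * Sig)) = LinearMap.range (toLin' B) := by
  apply le_antisymm
  · intro x hx
    rw [LinearMap.mem_ker, toLin'_apply, sub_mulVec, sub_eq_zero] at hx
    refine ⟨(C * Sig) *ᵥ x, hSig ?_⟩
    rw [toLin'_apply, mulVec_mulVec, mulVec_mulVec, hx]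
    simp only [Matrix.mul_assoc]
  · rintro _ ⟨y, rfl⟩
    have hzero : (Sig - Sig * B * C * Sig) * B = 0 := by
      rw [Matrix.sub_mul, Matrix.mul_assoc (Sig * B), Matrix.mul_assoc (Sig * B), hCB,
        Matrix.mul_one, sub_self]
    rw [LinearMap.mem_ker, toLin'_apply, toLin'_apply, mulVec_mulVec, hzero, zero_mulVec]

end Matrix

theorem stmt_14_general {d m : ℕ} (A Sig0 : Matrix (Fin d) (Fin d) ℝ)
    (hSig0 : Sig0.PosDef)
    (S : Matrix (Fin d) (Fin m) ℝ) (hS : Sᵀ * (A * Sig0 * Aᵀ) * S = 1) :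
    LinearMap.ker (Matrix.toLin' (Sig0 - Sig0 * Aᵀ * S * Sᵀ * A * Sig0)) =
      Submodule.span ℝ (Set.range fun i : Fin m => Aᵀ *ᵥ (Sᵀ i)) := by
  have hproj : Sig0 * Aᵀ * S * Sᵀ * A * Sig0 = Sig0 * (Aᵀ * S) * (Sᵀ * A) * Sig0 := by
    simp only [Matrix.mul_assoc]
  have hCB : Sᵀ * A * Sig0 * (Aᵀ * S) = 1 := by
    rw [← hS]; simp only [Matrix.mul_assoc]
  rw [hproj, ker_toLin'_sub_mul_mul_mul_eq_range _ _ _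
      (mulVec_injective_iff_isUnit.mpr hSig0.isUnit) hCB, range_toLin']
  -- `(Aᵀ * S).col i` and `Aᵀ *ᵥ Sᵀ i` unfold to the same dot products
  rfl

/-- The kernel of the BayesCG posterior covariance `Σₘ = Σ₀ − Σ₀ Aᵀ Sₘ Sₘᵀ A Σ₀` is the span
of the vectors `Aᵀ s₁, …, Aᵀ sₘ`, where `sᵢ` are the columns of `Sₘ`. -/
theorem stmt_14 {d m : ℕ} (A Sig0 : Matrix (Fin d) (Fin d) ℝ)
    (hA : IsUnit A.det) (hSig0 : Sig0.PosDef)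
    (S : Matrix (Fin d) (Fin m) ℝ) (hS : Sᵀ * (A * Sig0 * Aᵀ) * S = 1) :
    LinearMap.ker (Matrix.toLin' (Sig0 - Sig0 * Aᵀ * S * Sᵀ * A * Sig0)) =
      Submodule.span ℝ (Set.range fun i : Fin m => Aᵀ *ᵥ (Sᵀ i)) :=
  stmt_14_general A Sig0 hSig0 S hS
end

section
/- If m = d and S_d ∈ ℝ^{d×d} satisfies S_dᵀ (A Σ₀ Aᵀ) S_d = I_d with A invertible and Σ₀ symmetric positive definite, then Σ_d := Σ₀ − Σ₀ Aᵀ S_d S_dᵀ A Σ₀ = 0. -/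
open Matrix

/-- BayesCG terminates with zero covariance after `d` steps: if `S_d` satisfies
`S_dᵀ (A Σ₀ Aᵀ) S_d = I_d`, then `Σ_d = Σ₀ − Σ₀ Aᵀ S_d S_dᵀ A Σ₀ = 0`. -/
theorem stmt_15 {d : ℕ} (A Sig0 : Matrix (Fin d) (Fin d) ℝ)
    (hA : IsUnit A.det) (hSig0 : Sig0.PosDef)
    (S : Matrix (Fin d) (Fin d) ℝ) (hS : Sᵀ * (A * Sig0 * Aᵀ) * S = 1) :
    Sig0 - Sig0 * Aᵀ * S * Sᵀ * A * Sig0 = 0 := by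
  have hSig : IsUnit Sig0.det := isUnit_iff_ne_zero.mpr (ne_of_gt hSig0.det_pos)
  have hAT : IsUnit Aᵀ.det := by rwa [Matrix.det_transpose]
  have h1 : S * Sᵀ * (A * Sig0 * Aᵀ) = 1 := by
    rw [Matrix.mul_assoc, mul_eq_one_comm, ← Matrix.mul_assoc]
    simpa only [Matrix.mul_assoc] using hS
  have hSST : S * Sᵀ = (A * Sig0 * Aᵀ)⁻¹ :=
    (Matrix.inv_eq_left_inv h1).symm
  have e1 : Aᵀ * Aᵀ⁻¹ = 1 := Matrix.mul_nonsing_inv _ hAT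
  have e2 : Sig0⁻¹ * Sig0 = 1 := Matrix.nonsing_inv_mul _ hSig
  have e3 : A⁻¹ * A = 1 := Matrix.nonsing_inv_mul _ hA
  have key : Sig0 * Aᵀ * S * Sᵀ * A * Sig0 = Sig0 := by
    have : Sig0 * Aᵀ * S * Sᵀ * A * Sig0 = Sig0 * Aᵀ * (S * Sᵀ) * (A * Sig0) := by
      simp only [Matrix.mul_assoc]
    rw [this, hSST, Matrix.mul_inv_rev, Matrix.mul_inv_rev]
    calc Sig0 * Aᵀ * (Aᵀ⁻¹ * (Sig0⁻¹ * A⁻¹)) * (A * Sig0)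
        = Sig0 * ((Aᵀ * Aᵀ⁻¹) * (Sig0⁻¹ * ((A⁻¹ * A) * Sig0))) := by
          simp only [Matrix.mul_assoc]
      _ = Sig0 := by rw [e1, e3, Matrix.one_mul, Matrix.one_mul, ← Matrix.mul_assoc, Matrix.mul_nonsing_inv _ hSig, Matrix.one_mul]
  rw [key, sub_self]
end

section
/- Let x_m := x₀ + Σ₀ Aᵀ S_m S_mᵀ (b − A x₀) where A is invertible, Σ₀ symmetric positive definite, and S_mᵀ A Σ₀ Aᵀ S_m = I_m with m = d and S_d invertible. Then x_d = A⁻¹ b. -/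
open Matrix

/-- The BayesCG posterior mean after `d` iterations is the exact solution:
`x_d = x₀ + Σ₀ Aᵀ S_d S_dᵀ (b − A x₀) = A⁻¹ b`. -/
theorem stmt_16 {d : ℕ} (A Sig0 : Matrix (Fin d) (Fin d) ℝ)
    (hA : IsUnit A.det) (hSig0 : Sig0.PosDef)
    (S : Matrix (Fin d) (Fin d) ℝ) (hSinv : IsUnit S.det)
    (hS : Sᵀ * (A * Sig0 * Aᵀ) * S = 1) (b x₀ : Fin d → ℝ) :
    x₀ + (Sig0 * Aᵀ * S * Sᵀ) *ᵥ (b - A *ᵥ x₀) = A⁻¹ *ᵥ b := by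
  have hSig : IsUnit Sig0.det := isUnit_iff_ne_zero.mpr hSig0.det_pos.ne'
  have hAT : IsUnit Aᵀ.det := by rwa [Matrix.det_transpose]
  have hST : IsUnit Sᵀ.det := by rwa [Matrix.det_transpose]
  have hM : IsUnit (A * Sig0 * Aᵀ).det := by
    simp only [Matrix.det_mul]; exact (hA.mul hSig).mul hAT
  -- S * Sᵀ = (A * Sig0 * Aᵀ)⁻¹
  have hSS : S * Sᵀ = (A * Sig0 * Aᵀ)⁻¹ := by
    have h1 : Sᵀ * ((A * Sig0 * Aᵀ) * S) = 1 := by rw [← Matrix.mul_assoc]; exact hS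
    have h2 : (A * Sig0 * Aᵀ * S) * Sᵀ = 1 := mul_eq_one_comm.mp h1
    rw [Matrix.mul_assoc] at h2
    exact (Matrix.inv_eq_right_inv h2).symm
  have key : Sig0 * Aᵀ * S * Sᵀ = A⁻¹ := by
    rw [Matrix.mul_assoc, hSS, Matrix.mul_inv_rev, Matrix.mul_inv_rev, ← Matrix.mul_assoc,
      ← Matrix.mul_assoc, Matrix.mul_nonsing_inv_cancel_right _ _ hAT,
      Matrix.mul_nonsing_inv _ hSig, Matrix.one_mul]
  rw [key, Matrix.mulVec_sub, Matrix.mulVec_mulVec, Matrix.nonsing_inv_mul _ hA,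
    Matrix.one_mulVec]
  abel
end
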